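/- Let A be a real n-by-n Hurwitz matrix, B ∈ ℝ^n a vector, C ∈ ℝ^n a (row) vector, and let u : ℝ → ℝ be measurable with |u(τ)| ≤ M_u for all τ ∈ ℝ. Fix t ∈ ℝ, T_f ≥ 0 and T > 0, and define y(t+T_f) = C · ∫_{−∞}^{t+T_f} exp((t+T_f−τ)A) B u(τ) dτ and the finite-input-history approximation ŷ(t+T_f) = C · ∫_{t−T}^{t+T_f} exp((t+T_f−τ)A) B u(τ) dτ. Then there exist positive scalars α > 0 and β > 0, independent of T, such that |y(t+T_f) − ŷ(t+T_f)| ≤ β · exp(−α T); in particular the forward output prediction error from truncating the input history to length T (before time t) decays exponentially in T. -/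

import Mathlib

open NormedSpace MeasureTheory
open scoped RealInnerProductSpace

/-- A real square matrix is Hurwitz if every eigenvalue of it, viewed as a complex
matrix, has strictly negative real part. -/
def Matrix.IsHurwitz {n : ℕ} (A : Matrix (Fin n) (Fin n) ℝ) : Prop :=
  ∀ μ ∈ spectrum ℂ (A.map (algebraMap ℝ ℂ)), μ.re < 0

/-- The action of a square matrix on Euclidean space. -/
noncomputable def matVec {n : ℕ} (A : Matrix (Fin n) (Fin n) ℝ)
    (v : EuclideanSpace ℝ (Fin n)) : EuclideanSpace ℝ (Fin n) :=
  Matrix.toEuclideanLin A v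

/-!
Every eigenvalue of `exp A` is `exp ν` for an eigenvalue `ν` of `A` (take a common eigenvector
of the commuting matrices `A` and `exp A`), so for Hurwitz `A` the complex spectrum of `exp A`
lies in the open unit disc. By Gelfand's formula some power `exp A ^ k = exp (k • A)` is then
a strict contraction, and the semigroup property of `s ↦ exp (s • A)` upgrades this to
`‖exp (s • A)‖ ≤ K exp (-α s)` for `s ≥ 0`. The truncation error is
`⟪C, ∫_{-∞}^{t-T} exp ((t+T_f-τ) A) B u(τ) dτ⟫`, whose integrand is bounded by
`M_u K ‖B‖ exp (-α (t+T_f-τ))`, so it is at most a constant times `exp (-α (T + T_f))`.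
-/

open Filter Set
open scoped Matrix.Norms.L2Operator

theorem Module.End.exists_hasEigenvector_of_commute {K V : Type*} [Field K] [IsAlgClosed K]
    [AddCommGroup V] [Module K V] [FiniteDimensional K V] {f g : Module.End K V}
    (hfg : Commute f g) {μ : K} (hμ : g.HasEigenvalue μ) :
    ∃ ν v, f.HasEigenvector ν v ∧ g.HasEigenvector μ v := by
  have hmaps : MapsTo f (g.eigenspace μ) (g.eigenspace μ) :=
    mapsTo_genEigenspace_of_comm hfg.symm μ 1
  have : Nontrivial (g.eigenspace μ) := Submodule.nontrivial_iff_ne_bot.mpr hμ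
  obtain ⟨ν, hν⟩ := exists_eigenvalue (f.restrict hmaps)
  obtain ⟨w, hw⟩ := hν.exists_hasEigenvector
  have hw0 : (w : V) ≠ 0 := by simpa using hw.2
  refine ⟨ν, w, hasEigenvector_iff.mpr ⟨?_, hw0⟩, hasEigenvector_iff.mpr ⟨w.2, hw0⟩⟩
  exact mem_eigenspace_iff.mpr (congrArg Subtype.val hw.apply_eq_smul)

namespace Matrix

variable {m : Type*} [Fintype m] [DecidableEq m]

theorem exp_mulVec_of_mulVec_eq_smul {𝕂 : Type*} [RCLike 𝕂] {M : Matrix m m 𝕂} {v : m → 𝕂}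
    {μ : 𝕂} (h : M *ᵥ v = μ • v) : exp M *ᵥ v = exp μ • v := by
  have hpow (k : ℕ) : M ^ k *ᵥ v = μ ^ k • v := by
    induction k with
    | zero => simp
    | succ k ih => rw [pow_succ', ← mulVec_mulVec, ih, mulVec_smul, h, smul_smul, ← pow_succ]
  have hM := (exp_series_hasSum_exp' (𝕂 := 𝕂) M).map (mulVec.addMonoidHomLeft v)
    (continuous_id.matrix_mulVec continuous_const)
  have hμ := (exp_series_hasSum_exp' (𝕂 := 𝕂) μ).smul_const v
  simp only [Function.comp_def, mulVec.addMonoidHomLeft, AddMonoidHom.coe_mk, ZeroHom.coe_mk,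
    smul_mulVec, hpow, smul_smul] at hM hμ
  exact hM.unique hμ

theorem exists_exp_eq_of_mem_spectrum_exp {M : Matrix m m ℂ} {μ : ℂ}
    (hμ : μ ∈ spectrum ℂ (exp M)) : ∃ ν ∈ spectrum ℂ M, Complex.exp ν = μ := by
  rw [← spectrum_toLin', ← Module.End.hasEigenvalue_iff_mem_spectrum] at hμ
  have hcomm : Commute (toLin' M) (toLin' (exp M)) :=
    ((Commute.refl M).exp_right).map toLinAlgEquiv'
  obtain ⟨ν, v, hMv, hv⟩ := Module.End.exists_hasEigenvector_of_commute hcomm hμ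
  refine ⟨ν, ?_, smul_left_injective ℂ hv.2 ?_⟩
  · rw [← spectrum_toLin', ← Module.End.hasEigenvalue_iff_mem_spectrum]
    exact Module.End.hasEigenvalue_of_hasEigenvector hMv
  · have := exp_mulVec_of_mulVec_eq_smul (M := M) (by simpa using hMv.apply_eq_smul)
    simpa [Complex.exp_eq_exp_ℂ, this] using hv.apply_eq_smul

theorem exp_map_algebraMap (E : Matrix m m ℝ) :
    exp (E.map (algebraMap ℝ ℂ)) = (exp E).map (algebraMap ℝ ℂ) := by
  let := NormedAlgebra.restrictScalars ℚ ℝ (Matrix m m ℝ)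
  exact (map_exp (algebraMap ℝ ℂ).mapMatrix
    (continuous_id.matrix_map (continuous_algebraMap ℝ ℂ)) E).symm

theorem l2_opNorm_le_l2_opNorm_map_algebraMap (E : Matrix m m ℝ) :
    ‖E‖ ≤ ‖E.map (algebraMap ℝ ℂ)‖ := by
  have norm_ofReal (y : EuclideanSpace ℝ m) : ‖WithLp.toLp 2 (fun i => (y i : ℂ))‖ = ‖y‖ := by
    simp [EuclideanSpace.norm_eq]
  rw [← l2_opNorm_toEuclideanCLM]
  refine ContinuousLinearMap.opNorm_le_bound _ (norm_nonneg _) fun x => ?_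
  set xc : EuclideanSpace ℂ m := WithLp.toLp 2 fun i => (x i : ℂ)
  calc ‖toEuclideanCLM (𝕜 := ℝ) (n := m) E x‖
      = ‖(EuclideanSpace.equiv m ℂ).symm (E.map (algebraMap ℝ ℂ) *ᵥ xc)‖ := by
        rw [← norm_ofReal]
        congr 1
        ext i
        exact RingHom.map_mulVec Complex.ofRealHom E x.ofLp i
    _ ≤ ‖E.map (algebraMap ℝ ℂ)‖ * ‖xc‖ := l2_opNorm_mulVec _ _
    _ = ‖E.map (algebraMap ℝ ℂ)‖ * ‖x‖ := by rw [norm_ofReal]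

end Matrix

theorem exists_norm_pow_lt_one_of_spectrum_subset_ball {A : Type*} [NormedRing A]
    [NormedAlgebra ℂ A] [CompleteSpace A] {a : A} (ha : spectrum ℂ a ⊆ Metric.ball 0 1) :
    ∃ k : ℕ, 0 < k ∧ ‖a ^ k‖ < 1 := by
  rcases subsingleton_or_nontrivial A with _ | _
  · exact ⟨1, one_pos, by simp [Subsingleton.elim (a ^ 1) 0]⟩
  have hρ : spectralRadius ℂ a < 1 := by
    simpa using spectrum.spectralRadius_lt_of_forall_lt a (r := 1) fun z hz => by
      simpa [← NNReal.coe_lt_coe] using ha hz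
  obtain ⟨k, hk, hk0⟩ :=
    ((spectrum.pow_norm_pow_one_div_tendsto_nhds_spectralRadius a).eventually_lt_const hρ).and
      (eventually_gt_atTop 0) |>.exists
  refine ⟨k, hk0, lt_of_not_ge fun h1 => ?_⟩
  have : ‖a ^ k‖ ^ (1 / k : ℝ) < 1 := by simpa using hk
  exact this.not_ge (Real.one_le_rpow h1 (by positivity))

theorem norm_pow_mul_le {R : Type*} [SeminormedRing R] (x y : R) (k : ℕ) :
    ‖x ^ k * y‖ ≤ ‖x‖ ^ k * ‖y‖ := by
  induction k with
  | zero => simp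
  | succ k ih =>
    rw [pow_succ', mul_assoc, pow_succ', mul_assoc]
    exact (norm_mul_le _ _).trans (by gcongr)

theorem exists_norm_exp_smul_le_of_norm_exp_smul_lt_one {𝔸 : Type*} [NormedRing 𝔸]
    [NormedAlgebra ℝ 𝔸] [CompleteSpace 𝔸] {a : 𝔸} {h : ℝ} (hh : 0 < h)
    (ha : ‖exp (h • a)‖ < 1) :
    ∃ α > 0, ∃ K ≥ 0, ∀ s ≥ 0, ‖exp (s • a)‖ ≤ K * Real.exp (-α * s) := by
  let := NormedAlgebra.restrictScalars ℚ ℝ 𝔸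
  -- the `max` keeps `r` positive, so that `Real.log r < 0`
  set r := max ‖exp (h • a)‖ (1 / 2)
  have hr0 : 0 < r := lt_max_of_lt_right one_half_pos
  have hr1 : r < 1 := max_lt ha one_half_lt_one
  obtain ⟨M, hM⟩ := (isCompact_Icc (a := (0 : ℝ)) (b := h)).exists_bound_of_continuousOn
    (differentiable_exp_smul_const ℝ a).continuous.continuousOn
  have hM0 : 0 ≤ M := (norm_nonneg _).trans (hM 0 ⟨le_rfl, hh.le⟩)
  refine ⟨-Real.log r / h, div_pos (neg_pos.mpr (Real.log_neg hr0 hr1)) hh, M / r,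
    by positivity, fun s hs => ?_⟩
  set k := ⌊s / h⌋₊
  have hks : k * h ≤ s := (le_div_iff₀ hh).mp (Nat.floor_le (div_nonneg hs hh.le))
  have hsk : s < (k + 1) * h := (div_lt_iff₀ hh).mp (Nat.lt_floor_add_one _)
  have hsplit : exp (s • a) = exp (h • a) ^ k * exp ((s - k * h) • a) := by
    rw [← exp_nsmul, ← Nat.cast_smul_eq_nsmul ℝ, smul_smul,
      ← exp_add_of_commute (((Commute.refl a).smul_left _).smul_right _), ← add_smul,
      add_sub_cancel]
  have hpow : r ^ (k + 1) ≤ Real.exp (-(-Real.log r / h) * s) :=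
    calc r ^ (k + 1) = r ^ ((k + 1 : ℕ) : ℝ) := (Real.rpow_natCast r _).symm
      _ ≤ r ^ (s / h) := Real.rpow_le_rpow_of_exponent_ge hr0 hr1.le (by
          push_cast; rw [div_le_iff₀ hh]; exact hsk.le)
      _ = _ := by rw [Real.rpow_def_of_pos hr0]; ring_nf
  calc ‖exp (s • a)‖ ≤ ‖exp (h • a)‖ ^ k * ‖exp ((s - k * h) • a)‖ := by
        rw [hsplit]; exact norm_pow_mul_le ..
    _ ≤ r ^ k * M := by
        gcongr
        · exact le_max_left _ _
        · exact hM _ ⟨by linarith, by linarith⟩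
    _ = M / r * r ^ (k + 1) := by field_simp; ring
    _ ≤ M / r * Real.exp (-(-Real.log r / h) * s) := by gcongr

theorem Matrix.IsHurwitz.exists_norm_exp_smul_le {n : ℕ} {A : Matrix (Fin n) (Fin n) ℝ}
    (hA : A.IsHurwitz) :
    ∃ α > 0, ∃ K ≥ 0, ∀ s ≥ 0, ‖exp (s • A)‖ ≤ K * Real.exp (-α * s) := by
  have hspec : spectrum ℂ (exp (A.map (algebraMap ℝ ℂ))) ⊆ Metric.ball 0 1 := by
    intro μ hμ
    obtain ⟨ν, hν, rfl⟩ := Matrix.exists_exp_eq_of_mem_spectrum_exp hμ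
    simpa [Complex.norm_exp] using hA ν hν
  obtain ⟨k, hk0, hk⟩ := exists_norm_pow_lt_one_of_spectrum_subset_ball hspec
  refine exists_norm_exp_smul_le_of_norm_exp_smul_lt_one (h := k) (by positivity) ?_
  calc ‖exp ((k : ℝ) • A)‖ ≤ ‖(exp ((k : ℝ) • A)).map (algebraMap ℝ ℂ)‖ :=
        Matrix.l2_opNorm_le_l2_opNorm_map_algebraMap _
    _ = ‖exp (A.map (algebraMap ℝ ℂ)) ^ k‖ := by
        rw [← Matrix.exp_map_algebraMap, Nat.cast_smul_eq_nsmul, ← RingHom.mapMatrix_apply,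
          map_nsmul, RingHom.mapMatrix_apply, Matrix.exp_nsmul]
    _ < 1 := hk

theorem norm_matVec_le {n : ℕ} (E : Matrix (Fin n) (Fin n) ℝ) (x : EuclideanSpace ℝ (Fin n)) :
    ‖matVec E x‖ ≤ ‖E‖ * ‖x‖ :=
  (Matrix.toEuclideanCLM (𝕜 := ℝ) (n := Fin n) E).le_opNorm x

theorem continuous_matVec_left {n : ℕ} (x : EuclideanSpace ℝ (Fin n)) :
    Continuous fun E : Matrix (Fin n) (Fin n) ℝ => matVec E x := by
  show Continuous fun E : Matrix (Fin n) (Fin n) ℝ => WithLp.toLp 2 (E.mulVec (WithLp.ofLp x))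
  fun_prop

theorem norm_smul_matVec_exp_smul_le {n : ℕ} {A : Matrix (Fin n) (Fin n) ℝ} {α K : ℝ}
    (hK : ∀ s ≥ 0, ‖exp (s • A)‖ ≤ K * Real.exp (-α * s)) {r Mu d τ : ℝ} (hr : |r| ≤ Mu)
    (hτ : τ ≤ d) (B : EuclideanSpace ℝ (Fin n)) :
    ‖r • matVec (exp ((d - τ) • A)) B‖ ≤ Mu * K * ‖B‖ * Real.exp (-α * d) * Real.exp (α * τ) :=
  calc ‖r • matVec (exp ((d - τ) • A)) B‖ = |r| * ‖matVec (exp ((d - τ) • A)) B‖ := norm_smul _ _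
    _ ≤ Mu * (K * Real.exp (-α * (d - τ)) * ‖B‖) := by
        gcongr
        · exact (abs_nonneg r).trans hr
        · exact (norm_matVec_le _ _).trans (by gcongr; exact hK _ (sub_nonneg.mpr hτ))
    _ = Mu * K * ‖B‖ * Real.exp (-α * d) * Real.exp (α * τ) := by
        rw [show -α * (d - τ) = -α * d + α * τ by ring, Real.exp_add]; ring

section Tail

variable {E : Type*} [NormedAddCommGroup E] {F : ℝ → E} {α c : ℝ}

theorem integrableOn_Iic_of_norm_le_mul_exp (hα : 0 < α) {x : ℝ}
    (hF : AEStronglyMeasurable F (volume.restrict (Iic x)))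
    (hb : ∀ τ ≤ x, ‖F τ‖ ≤ c * Real.exp (α * τ)) : IntegrableOn F (Iic x) :=
  ((integrableOn_exp_mul_Iic hα x).const_mul c).mono' hF
    ((ae_restrict_iff' measurableSet_Iic).mpr (.of_forall hb))

variable [NormedSpace ℝ E]

theorem norm_setIntegral_Iic_le_of_norm_le_mul_exp (hα : 0 < α) {x : ℝ}
    (hb : ∀ τ ≤ x, ‖F τ‖ ≤ c * Real.exp (α * τ)) :
    ‖∫ τ in Iic x, F τ‖ ≤ c * Real.exp (α * x) / α :=
  calc ‖∫ τ in Iic x, F τ‖ ≤ ∫ τ in Iic x, c * Real.exp (α * τ) :=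
        norm_integral_le_of_norm_le ((integrableOn_exp_mul_Iic hα x).const_mul c)
          ((ae_restrict_iff' measurableSet_Iic).mpr (.of_forall hb))
    _ = c * Real.exp (α * x) / α := by
        rw [integral_const_mul, integral_exp_mul_Iic hα, mul_div_assoc]

theorem norm_setIntegral_Iic_sub_intervalIntegral_le (hα : 0 < α) {a d : ℝ} (had : a ≤ d)
    (hF : AEStronglyMeasurable F (volume.restrict (Iic d)))
    (hb : ∀ τ ≤ d, ‖F τ‖ ≤ c * Real.exp (α * τ)) :
    ‖(∫ τ in Iic d, F τ) - ∫ τ in a..d, F τ‖ ≤ c * Real.exp (α * a) / α := by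
  have hb_a : ∀ τ ≤ a, ‖F τ‖ ≤ c * Real.exp (α * τ) := fun τ hτ => hb τ (hτ.trans had)
  have hF_a := hF.mono_measure (Measure.restrict_mono (Iic_subset_Iic.mpr had) le_rfl)
  rw [← intervalIntegral.integral_Iic_sub_Iic
    (integrableOn_Iic_of_norm_le_mul_exp hα hF_a hb_a)
    (integrableOn_Iic_of_norm_le_mul_exp hα hF hb), sub_sub_cancel]
  exact norm_setIntegral_Iic_le_of_norm_le_mul_exp hα hb_a

end Tail

/-- For a stable (Hurwitz) linear system `x' = Ax + Bu`, `y = Cx`, with bounded measurable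
input `u`, the error between the steady-state output
`y(t+T_f) = C ⬝ ∫_{-∞}^{t+T_f} exp ((t+T_f-τ) A) B u(τ) dτ` and its finite-input-history
approximation `ŷ(t+T_f) = C ⬝ ∫_{t-T}^{t+T_f} exp ((t+T_f-τ) A) B u(τ) dτ` decays
exponentially in the history length `T`: there are `α > 0`, `β > 0`, independent of `T`,
with `|y(t+T_f) - ŷ(t+T_f)| ≤ β exp (-α T)` for all `T > 0`. -/
theorem forward_output_truncation_decay {n : ℕ}
    (A : Matrix (Fin n) (Fin n) ℝ) (hA : A.IsHurwitz)
    (B C : EuclideanSpace ℝ (Fin n)) (u : ℝ → ℝ) (hu : Measurable u)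
    (Mu : ℝ) (hMu : ∀ τ : ℝ, |u τ| ≤ Mu)
    (t Tf : ℝ) (hTf : 0 ≤ Tf) :
    ∃ α > (0 : ℝ), ∃ β > (0 : ℝ), ∀ T : ℝ, 0 < T →
      |⟪C, ∫ τ in Set.Iic (t + Tf), u τ • matVec (exp ((t + Tf - τ) • A)) B⟫
          - ⟪C, ∫ τ in (t - T)..(t + Tf), u τ • matVec (exp ((t + Tf - τ) • A)) B⟫|
        ≤ β * Real.exp (-α * T) := by
  obtain ⟨α, hα, K, hK0, hK⟩ := hA.exists_norm_exp_smul_le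
  set d := t + Tf with hd
  set F : ℝ → EuclideanSpace ℝ (Fin n) := fun τ => u τ • matVec (exp ((d - τ) • A)) B
  have hF_meas : AEStronglyMeasurable F (volume.restrict (Iic d)) :=
    hu.aestronglyMeasurable.smul ((continuous_matVec_left B).comp
      ((differentiable_exp_smul_const ℝ A).continuous.comp
        (continuous_const.sub continuous_id))).aestronglyMeasurable
  have hMu0 : 0 ≤ Mu := (abs_nonneg _).trans (hMu 0)
  have hTf_decay : Real.exp (-α * Tf) ≤ 1 := Real.exp_le_one_iff.mpr (by nlinarith)
  refine ⟨α, hα, Mu * K * ‖B‖ * ‖C‖ / α + 1, by positivity, fun T hT => ?_⟩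
  have hshift : Real.exp (-α * d) * Real.exp (α * (t - T))
      = Real.exp (-α * Tf) * Real.exp (-α * T) := by
    rw [← Real.exp_add, ← Real.exp_add, hd]; ring_nf
  calc _ = |⟪C, (∫ τ in Iic d, F τ) - ∫ τ in (t - T)..d, F τ⟫| := by rw [inner_sub_right]
    _ ≤ ‖C‖ * ‖(∫ τ in Iic d, F τ) - ∫ τ in (t - T)..d, F τ‖ := abs_real_inner_le_norm _ _
    _ ≤ ‖C‖ * (Mu * K * ‖B‖ * Real.exp (-α * d) * Real.exp (α * (t - T)) / α) := by
        gcongr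
        exact norm_setIntegral_Iic_sub_intervalIntegral_le hα (by linarith) hF_meas
          fun τ hτ => norm_smul_matVec_exp_smul_le hK (hMu τ) hτ B
    _ = Mu * K * ‖B‖ * ‖C‖ / α * Real.exp (-α * Tf) * Real.exp (-α * T) := by
        rw [mul_assoc _ (Real.exp (-α * Tf)), ← hshift]; ring
    _ ≤ (Mu * K * ‖B‖ * ‖C‖ / α + 1) * Real.exp (-α * T) := by
        gcongr
        nlinarith [show 0 ≤ Mu * K * ‖B‖ * ‖C‖ / α by positivity]
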